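/- arXiv:1811.06592 — 2 statements merged into one kernel-verified Lean document; each statement's English description precedes it below -/
import Mathlib

section
/- For all real α, λ and every real x, L_μ^{(α)}(x) = M_μ^{(α,λ)} · L_μ^{(λ)}(x), where M_μ^{(α,λ)} = Σ_{k=0}^{N−1} ((α−λ)_k / k!)(−1)^k A_μ^k. In particular M_μ^{(α,λ)} = L_μ^{(α)}(0) L_μ^{(λ)}(0)^{−1}, and its entries are (M_μ^{(α,λ)})_{r,s} = (μ_r/μ_s)(α−λ)_{r−s}/(r−s)! for r ≥ s and 0 for r < s. -/
open scoped BigOperators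
open Matrix MeasureTheory

noncomputable section

/-- Pochhammer symbol `(a)_m = a(a+1)⋯(a+m-1)`. -/
def poch (a : ℝ) (m : ℕ) : ℝ := ∏ i ∈ Finset.range m, (a + i)

/-- Generalized Laguerre polynomial `L_n^{(α)}(x)`. -/
def lagP (α : ℝ) (n : ℕ) (x : ℝ) : ℝ :=
  ∑ k ∈ Finset.range (n + 1),
    (-1 : ℝ) ^ k * poch (α + k + 1) (n - k) * x ^ k / ((n - k).factorial * k.factorial)

/-- The matrix `L_μ^{(α)}(x)`; the 0-based index pair `(i,j)` corresponds to the
1-based index pair `(i+1, j+1)` of the paper. -/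
def LagMat (N : ℕ) (μ : Fin N → ℝ) (α : ℝ) (x : ℝ) : Matrix (Fin N) (Fin N) ℝ :=
  Matrix.of fun m n : Fin N =>
    if (n : ℕ) ≤ (m : ℕ) then μ m / μ n * lagP (α + (n : ℕ) + 1) ((m : ℕ) - (n : ℕ)) x else 0

/-- The matrix `A_μ = S_μ A S_μ⁻¹`, written entrywise. -/
def AmuMat (N : ℕ) (μ : Fin N → ℝ) : Matrix (Fin N) (Fin N) ℝ :=
  Matrix.of fun i j : Fin N => if (i : ℕ) = (j : ℕ) + 1 then -(μ i / μ j) else 0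

/-- `J = diag(1,…,N)`. -/
def Jmat (N : ℕ) : Matrix (Fin N) (Fin N) ℝ :=
  Matrix.diagonal fun i => ((i : ℕ) + 1 : ℝ)

/-- `T^{(ν)}(x) = e^{-x} Σ_k δ_k x^{ν+k} E_{k,k}`. -/
def Tmat (N : ℕ) (δ : Fin N → ℝ) (ν : ℝ) (x : ℝ) : Matrix (Fin N) (Fin N) ℝ :=
  Matrix.diagonal fun k => Real.exp (-x) * δ k * x ^ (ν + (k : ℕ) + 1)

/-- The weight `W_μ^{(α,ν)}(x) = L_μ^{(α)}(x) T^{(ν)}(x) L_μ^{(α)}(x)^*`. -/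
def Wmat (N : ℕ) (μ δ : Fin N → ℝ) (α ν : ℝ) (x : ℝ) : Matrix (Fin N) (Fin N) ℝ :=
  LagMat N μ α x * Tmat N δ ν x * (LagMat N μ α x)ᵀ

/-- Entrywise evaluation of a matrix of polynomials. -/
def matPolyEval {N : ℕ} (P : Matrix (Fin N) (Fin N) (Polynomial ℝ)) (x : ℝ) :
    Matrix (Fin N) (Fin N) ℝ :=
  Matrix.of fun i j => (P i j).eval x

/-- Entrywise derivative of a matrix of polynomials. -/
def matPolyDeriv {N : ℕ} (P : Matrix (Fin N) (Fin N) (Polynomial ℝ)) :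
    Matrix (Fin N) (Fin N) (Polynomial ℝ) :=
  Matrix.of fun i j => Polynomial.derivative (P i j)

/-- `P` is the monic (matrix valued) orthogonal polynomial of degree `n` w.r.t. the
weight `W` on `(0,∞)`. -/
def MonicOrth (N : ℕ) (W : ℝ → Matrix (Fin N) (Fin N) ℝ) (n : ℕ)
    (P : Matrix (Fin N) (Fin N) (Polynomial ℝ)) : Prop :=
  (∀ i j, (P i j).degree ≤ n) ∧
  Matrix.of (fun i j => (P i j).coeff n) = (1 : Matrix (Fin N) (Fin N) ℝ) ∧
  ∀ k, k < n → ∀ i j, (∫ x in Set.Ioi (0 : ℝ), (matPolyEval P x * W x) i j * x ^ k) = 0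

/-- Conditions (C1) and (C2) at level `ν`, relating `δ = δ^{(ν)}`, `δ' = δ^{(ν+1)}`,
`c = c^{(ν)}` and `d = d^{(ν)}`. -/
def PearsonCond (N : ℕ) (μ δ δ' : Fin N → ℝ) (c d : ℝ) : Prop :=
  0 < c ∧ 0 < d ∧
  (∀ k : Fin N, δ' k = (((k : ℕ) + 1) * d + c) * δ k) ∧
  ∀ (k : Fin N) (h : (k : ℕ) + 1 < N),
    μ ⟨(k : ℕ) + 1, h⟩ ^ 2 / μ k ^ 2 =
      d * ((k : ℕ) + 1) * ((N : ℝ) - ((k : ℕ) + 1)) * δ ⟨(k : ℕ) + 1, h⟩ / δ' k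

/-- `Φ^{(α,ν)}(x)` (with `c = c^{(ν)}`, `d = d^{(ν)}`). -/
def PhiMat (N : ℕ) (μ : Fin N → ℝ) (α c d : ℝ) (x : ℝ) : Matrix (Fin N) (Fin N) ℝ :=
  ((LagMat N μ α 0)ᵀ)⁻¹ *
    (-(d * x ^ 2) • (AmuMat N μ)ᵀ + x • (d • Jmat N + c • (1 : Matrix (Fin N) (Fin N) ℝ))) *
    (LagMat N μ α 0)ᵀ

/-- `Ψ^{(α,ν)}(x)` (with `δ = δ^{(ν)}`, `δ' = δ^{(ν+1)}`, `c = c^{(ν)}`, `d = d^{(ν)}`). -/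
def PsiMat (N : ℕ) (μ δ δ' : Fin N → ℝ) (α ν c d : ℝ) (x : ℝ) : Matrix (Fin N) (Fin N) ℝ :=
  ((LagMat N μ α 0)ᵀ)⁻¹ *
    (x • (d • (Jmat N - (AmuMat N μ)ᵀ * (Jmat N + (ν + 1) • (1 : Matrix (Fin N) (Fin N) ℝ)) -
        ((N : ℝ) + 1) • (1 : Matrix (Fin N) (Fin N) ℝ)) - c • (1 : Matrix (Fin N) (Fin N) ℝ)) +
      (Jmat N + (ν + 1) • (1 : Matrix (Fin N) (Fin N) ℝ)) *
        (d • Jmat N + c • (1 : Matrix (Fin N) (Fin N) ℝ)) +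
      (Matrix.diagonal δ)⁻¹ * AmuMat N μ * Matrix.diagonal δ') *
    (LagMat N μ α 0)ᵀ

/-- `K_n^{(β,ν)}` (with `c = c^{(ν)}`, `d = d^{(ν)}`). -/
def Kmat (N : ℕ) (μ : Fin N → ℝ) (β ν c d : ℝ) (n : ℕ) : Matrix (Fin N) (Fin N) ℝ :=
  LagMat N μ β 0 *
    (d • (Jmat N - (Jmat N + (ν + n) • (1 : Matrix (Fin N) (Fin N) ℝ)) * AmuMat N μ -
      ((N : ℝ) + 1) • (1 : Matrix (Fin N) (Fin N) ℝ)) - c • (1 : Matrix (Fin N) (Fin N) ℝ)) *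
    (LagMat N μ β 0)⁻¹

/-- `(Q D^{(α,ν)})(x)` for a matrix valued polynomial `Q`. -/
def Dapply (N : ℕ) (μ : Fin N → ℝ) (α ν : ℝ)
    (Q : Matrix (Fin N) (Fin N) (Polynomial ℝ)) (x : ℝ) : Matrix (Fin N) (Fin N) ℝ :=
  x • matPolyEval (matPolyDeriv (matPolyDeriv Q)) x +
    matPolyEval (matPolyDeriv Q) x *
      ((-x) • (AmuMat N μ + 1)⁻¹ + (ν + 1) • (1 : Matrix (Fin N) (Fin N) ℝ) + Jmat N +
        (α • (1 : Matrix (Fin N) (Fin N) ℝ) + Jmat N) * AmuMat N μ) +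
    matPolyEval Q x * ((α - ν) • (AmuMat N μ + 1)⁻¹ - Jmat N)

/-! The rising-factorial coefficients `(a)_m / m!` are `Ring.multichoose a m`, and the
Chu–Vandermonde identity `Ring.add_choose_eq` (at `-a`, `-b`) makes them a convolution semigroup
in `a`. Expanding `L_j^{(b)}` and resumming with this identity gives the connection formula
`L_n^{(a)} = ∑_j ((a - b)_{n-j} / (n-j)!) L_j^{(b)}`. Since `(-A_μ)^k` has the entries `μ_r / μ_s`
on its `k`-th subdiagonal and zeros elsewhere, `M` has the stated entries, and the entries
of `M L_μ^{(λ)}(x)` are exactly the right-hand sides of the connection formula with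
`a = α + n + 1`, `b = λ + n + 1`. The matrix `L_μ^{(λ)}(0)` is unitriangular, hence invertible. -/

open Finset

lemma poch_eq_ascPochhammer_eval (a : ℝ) (m : ℕ) : poch a m = (ascPochhammer ℝ m).eval a := by
  induction m with
  | zero => simp [poch]
  | succ m ih => rw [poch, prod_range_succ, ← poch, ih, ascPochhammer_succ_eval]

lemma poch_div_factorial (a : ℝ) (m : ℕ) : poch a m / m.factorial = Ring.multichoose a m := by
  rw [div_eq_iff (by positivity), poch_eq_ascPochhammer_eval,
    ← Polynomial.ascPochhammer_smeval_eq_eval,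
    ← Ring.factorial_nsmul_multichoose_eq_ascPochhammer, nsmul_eq_mul, mul_comm]

lemma Ring.multichoose_add {R : Type*} [Ring R] [BinomialRing R] {a b : R} (h : Commute a b)
    (m : ℕ) : Ring.multichoose (a + b) m =
      ∑ ij ∈ antidiagonal m, Ring.multichoose a ij.1 * Ring.multichoose b ij.2 := by
  have h := Ring.add_choose_eq m h.neg_left.neg_right
  rw [← neg_add, Ring.choose_neg'] at h
  simp only [Ring.choose_neg', smul_mul_smul_comm] at h
  rw [← smul_left_cancel_iff (Int.negOnePow m), h, smul_sum]
  refine sum_congr rfl fun ij hij => ?_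
  rw [← Int.negOnePow_add, ← Nat.cast_add, mem_antidiagonal.mp hij]

lemma Ring.multichoose_add_eq_sum_range {R : Type*} [CommRing R] [BinomialRing R] (a b : R)
    (m : ℕ) : Ring.multichoose (a + b) m =
      ∑ i ∈ range (m + 1), Ring.multichoose a i * Ring.multichoose b (m - i) := by
  rw [Ring.multichoose_add (Commute.all a b), Nat.sum_antidiagonal_eq_sum_range_succ_mk]

lemma lagP_eq_sum_multichoose (b x : ℝ) (n : ℕ) :
    lagP b n x = ∑ k ∈ range (n + 1),
      (-x) ^ k / k.factorial * Ring.multichoose (b + k + 1) (n - k) := by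
  refine sum_congr rfl fun k _ => ?_
  rw [← poch_div_factorial, neg_pow x]
  field_simp

lemma lagP_eq_sum_lagP (a b x : ℝ) (n : ℕ) :
    lagP a n x = ∑ j ∈ range (n + 1), Ring.multichoose (a - b) (n - j) * lagP b j x := by
  symm
  calc ∑ j ∈ range (n + 1), Ring.multichoose (a - b) (n - j) * lagP b j x
      = ∑ j ∈ range (n + 1), ∑ k ∈ range (j + 1), Ring.multichoose (a - b) (n - j) *
          ((-x) ^ k / k.factorial * Ring.multichoose (b + k + 1) (j - k)) := by
        simp_rw [lagP_eq_sum_multichoose, mul_sum]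
    _ = ∑ k ∈ range (n + 1), ∑ j ∈ Ico k (n + 1), Ring.multichoose (a - b) (n - j) *
          ((-x) ^ k / k.factorial * Ring.multichoose (b + k + 1) (j - k)) :=
        sum_comm' fun j k => by simp only [mem_range, mem_Ico]; omega
    _ = ∑ k ∈ range (n + 1), (-x) ^ k / k.factorial * ∑ l ∈ range (n - k + 1),
          Ring.multichoose (b + k + 1) l * Ring.multichoose (a - b) (n - k - l) := by
        refine sum_congr rfl fun k hk => ?_
        rw [sum_Ico_eq_sum_range, mul_sum,
          show n + 1 - k = n - k + 1 by rw [mem_range] at hk; omega]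
        refine sum_congr rfl fun l _ => ?_
        rw [Nat.add_sub_cancel_left, Nat.sub_sub]
        ring
    _ = lagP a n x := by
        simp_rw [← Ring.multichoose_add_eq_sum_range, lagP_eq_sum_multichoose a]
        refine sum_congr rfl fun k _ => ?_
        ring_nf

section

variable {N : ℕ} {μ : Fin N → ℝ}

lemma AmuMat_pow_apply (hμ : ∀ k, μ k ≠ 0) (k : ℕ) (i j : Fin N) :
    (AmuMat N μ ^ k) i j = if (i : ℕ) = j + k then (-1) ^ k * (μ i / μ j) else 0 := by
  induction k generalizing i with
  | zero =>
    simp only [pow_zero, Matrix.one_apply, add_zero, Fin.ext_iff, one_mul]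
    split_ifs with h
    · rw [Fin.ext h, div_self (hμ j)]
    · rfl
  | succ k ih =>
    rw [pow_succ', mul_apply]
    rcases Nat.eq_zero_or_pos (i : ℕ) with hi | hi
    · simp [AmuMat, hi]
    set t : Fin N := ⟨i - 1, by omega⟩
    have ht : (t : ℕ) = i - 1 := rfl
    rw [Fintype.sum_eq_single t fun s hs => by
      rw [AmuMat, of_apply, if_neg (by contrapose! hs; ext; omega), zero_mul]]
    rw [ih, AmuMat, of_apply, if_pos (by omega)]
    split_ifs with h₁ h₂ h₂
    · field_simp [hμ t]
      ring
    · omega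
    · omega
    · rw [mul_zero]

lemma sum_smul_AmuMat_pow_apply (hμ : ∀ k, μ k ≠ 0) (c : ℝ) (r s : Fin N) :
    (∑ k ∈ range N, (poch c k / k.factorial * (-1 : ℝ) ^ k) • AmuMat N μ ^ k) r s =
      if (s : ℕ) ≤ r then μ r / μ s * poch c (r - s) / (r - s : ℕ).factorial else 0 := by
  simp only [Matrix.sum_apply, Matrix.smul_apply, AmuMat_pow_apply hμ, smul_eq_mul, mul_ite,
    mul_zero]
  split_ifs with hsr
  · rw [sum_eq_single_of_mem (r - s : ℕ) (mem_range.mpr (by omega))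
      fun k _ hk => if_neg (by omega), if_pos (by omega)]
    have hsq : ((-1 : ℝ) ^ (r - s : ℕ)) * (-1) ^ (r - s : ℕ) = 1 := by rw [← mul_pow]; norm_num
    linear_combination (μ r / μ s * poch c (r - s) / (r - s : ℕ).factorial) * hsq
  · exact sum_eq_zero fun k _ => if_neg (by omega)

lemma LagMat_eq_sum_smul_AmuMat_pow_mul (hμ : ∀ k, μ k ≠ 0) (α lam x : ℝ) :
    LagMat N μ α x =
      (∑ k ∈ range N, (poch (α - lam) k / k.factorial * (-1 : ℝ) ^ k) • AmuMat N μ ^ k) *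
        LagMat N μ lam x := by
  ext m n
  have hterm : ∀ s : Fin N,
      (∑ k ∈ range N, (poch (α - lam) k / k.factorial * (-1 : ℝ) ^ k) • AmuMat N μ ^ k) m s *
        LagMat N μ lam x s n = if (n : ℕ) ≤ s ∧ (s : ℕ) ≤ m then μ m / μ n *
          (Ring.multichoose (α - lam) (m - s) * lagP (lam + n + 1) (s - n) x) else 0 := by
    intro s
    rw [sum_smul_AmuMat_pow_apply hμ, LagMat, of_apply]
    split_ifs with h₁ h₂ h₂
    · rw [← poch_div_factorial]
      field_simp [hμ s]
    all_goals grind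
  rw [mul_apply, Fintype.sum_congr _ _ hterm,
    Fin.sum_univ_eq_sum_range (fun t => if n ≤ t ∧ t ≤ m then μ m / μ n *
      (Ring.multichoose (α - lam) (m - t) * lagP (lam + n + 1) (t - n) x) else 0),
    ← sum_filter, LagMat, of_apply]
  split_ifs with hnm
  · have hIco : (range N).filter (fun t : ℕ => n ≤ t ∧ t ≤ m) = Ico (n : ℕ) (m + 1) := by
      ext t; simp only [mem_filter, mem_range, mem_Ico]; omega
    rw [hIco, sum_Ico_eq_sum_range, ← mul_sum, lagP_eq_sum_lagP _ (lam + n + 1),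
      show (m + 1 - n : ℕ) = m - n + 1 by omega]
    congr 1
    refine sum_congr rfl fun j _ => ?_
    rw [Nat.add_sub_cancel_left, Nat.sub_sub]
    ring_nf
  · exact (sum_eq_zero fun t ht => by simp at ht; omega).symm

lemma LagMat_isLowerTriangular (α x : ℝ) : (LagMat N μ α x).IsLowerTriangular :=
  fun _ _ hij => if_neg (not_le.mpr hij)

lemma LagMat_det (hμ : ∀ k, μ k ≠ 0) (α x : ℝ) : (LagMat N μ α x).det = 1 := by
  rw [det_of_isLowerTriangular _ (LagMat_isLowerTriangular α x)]
  refine prod_eq_one fun i _ => ?_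
  rw [LagMat, of_apply, if_pos le_rfl, Nat.sub_self, div_self (hμ i), one_mul]
  simp [lagP, poch]

end

theorem LagMat_parameter_connection_general (N : ℕ) (μ : Fin N → ℝ)
    (hμ : ∀ k, μ k ≠ 0) (α lam : ℝ) (M : Matrix (Fin N) (Fin N) ℝ)
    (hM : M = ∑ k ∈ Finset.range N,
      ((poch (α - lam) k / k.factorial) * (-1 : ℝ) ^ k) • AmuMat N μ ^ k) :
    (∀ x : ℝ, LagMat N μ α x = M * LagMat N μ lam x) ∧
    M = LagMat N μ α 0 * (LagMat N μ lam 0)⁻¹ ∧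
    ∀ r s : Fin N, M r s =
      if (s : ℕ) ≤ (r : ℕ) then
        μ r / μ s * poch (α - lam) ((r : ℕ) - (s : ℕ)) / ((r : ℕ) - (s : ℕ)).factorial
      else 0 := by
  subst hM
  refine ⟨LagMat_eq_sum_smul_AmuMat_pow_mul hμ α lam, ?_, sum_smul_AmuMat_pow_apply hμ _⟩
  have hdet : IsUnit (LagMat N μ lam 0).det := by rw [LagMat_det hμ]; exact isUnit_one
  rw [LagMat_eq_sum_smul_AmuMat_pow_mul hμ α lam 0, mul_nonsing_inv_cancel_right _ _ hdet]

/-- relation between `L_μ^{(α)}` and `L_μ^{(λ)}`. -/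
theorem LagMat_parameter_connection (N : ℕ) (hN : 1 ≤ N) (μ : Fin N → ℝ)
    (hμ : ∀ k, μ k ≠ 0) (α lam : ℝ) (M : Matrix (Fin N) (Fin N) ℝ)
    (hM : M = ∑ k ∈ Finset.range N,
      ((poch (α - lam) k / k.factorial) * (-1 : ℝ) ^ k) • AmuMat N μ ^ k) :
    (∀ x : ℝ, LagMat N μ α x = M * LagMat N μ lam x) ∧
    M = LagMat N μ α 0 * (LagMat N μ lam 0)⁻¹ ∧
    ∀ r s : Fin N, M r s =
      if (s : ℕ) ≤ (r : ℕ) then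
        μ r / μ s * poch (α - lam) ((r : ℕ) - (s : ℕ)) / ((r : ℕ) - (s : ℕ)).factorial
      else 0 :=
  LagMat_parameter_connection_general N μ hμ α lam M hM
end
end

section
/- For all real α, ν and every real x the following two matrix identities hold, expressing that conjugation of the differential operator D^{(α,ν)} by L_μ^{(α)} yields the diagonal coefficients x, (ν+1)I + J − xI, and (α−ν)I − J: (i) ( −x(A_μ+I)^{−1} + (ν+1)I + J + (αI+J)A_μ ) · L_μ^{(α)}(x) = 2x · L_μ^{(α)}(x) · A_μ + L_μ^{(α)}(x) · ((ν+1)I + J − xI); (ii) ( (α−ν)(A_μ+I)^{−1} − J ) · L_μ^{(α)}(x) = x · L_μ^{(α)}(x) · A_μ² + L_μ^{(α)}(x) · A_μ · ((ν+1)I + J − xI) + L_μ^{(α)}(x) · ((α−ν)I − J). -/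
open scoped BigOperators
open Matrix MeasureTheory

noncomputable section

/-!
Write every matrix in sight as `S_μ M S_μ⁻¹` with `M` lower triangular, and record `M` by the
function `(j, d) ↦ M (j + d) j`. Products become convolutions of these functions: `A_μ` acts as
a shift in `d`, `J` as multiplication by the row or column index, and `(A_μ + I)⁻¹` as partial
summation in `d`, which turns `L^{(α)}` into `L^{(α+1)}`. Entrywise, both identities then reduce
to the two classical recurrences `L_{n+1}^{(a+1)} = L_{n+1}^{(a)} + L_n^{(a+1)}` and
`(n+1) L_{n+1}^{(a)} = (n+1+a) L_n^{(a)} - x L_n^{(a+1)}`, which are checked coefficientwise.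
-/

open Finset

section Laguerre

open Nat

lemma poch_succ_right (a : ℝ) (m : ℕ) : poch a (m + 1) = poch a m * (a + m) :=
  prod_range_succ _ _

lemma poch_succ_left (a : ℝ) (m : ℕ) : poch a (m + 1) = a * poch (a + 1) m := by
  simp only [poch, prod_range_succ', Nat.cast_add, Nat.cast_one, CharP.cast_eq_zero, add_zero]
  rw [mul_comm]
  congr 1
  exact prod_congr rfl fun i _ => by ring

lemma lagP_zero (a x : ℝ) : lagP a 0 x = 1 := by
  simp [lagP, poch]

lemma lagP_one (a x : ℝ) : lagP a 1 x = a + 1 - x := by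
  simp [lagP, sum_range_succ, poch, sub_eq_add_neg, add_comm]

def lagCoeff (a : ℝ) (n k : ℕ) : ℝ :=
  (-1) ^ k * poch (a + k + 1) (n - k) / ((n - k)! * k !)

lemma lagP_eq_sum (a x : ℝ) (n : ℕ) :
    lagP a n x = ∑ k ∈ range (n + 1), lagCoeff a n k * x ^ k :=
  sum_congr rfl fun _ _ => by rw [lagCoeff, mul_div_right_comm]

lemma lagCoeff_self (a : ℝ) (n : ℕ) : lagCoeff a n n = (-1) ^ n / n ! := by
  simp [lagCoeff, poch]

lemma lagCoeff_zero_right (a : ℝ) (n : ℕ) : lagCoeff a n 0 = poch (a + 1) n / n ! := by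
  simp [lagCoeff]

lemma lagCoeff_add_one_succ (a : ℝ) {n k : ℕ} (hk : k ≤ n) :
    lagCoeff (a + 1) (n + 1) k = lagCoeff a (n + 1) k + lagCoeff (a + 1) n k := by
  obtain ⟨m, rfl⟩ := Nat.exists_eq_add_of_le hk
  rw [lagCoeff, lagCoeff, lagCoeff, show k + m + 1 - k = m + 1 by omega, Nat.add_sub_cancel_left,
    poch_succ_right, poch_succ_left, show a + k + 1 + 1 = a + 1 + k + 1 by ring, factorial_succ]
  push_cast
  field_simp
  ring

lemma succ_mul_lagCoeff_succ (a : ℝ) {n k : ℕ} (hk : k < n) :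
    (n + 1) * lagCoeff a (n + 1) (k + 1) =
      (n + 1 + a) * lagCoeff a n (k + 1) - lagCoeff (a + 1) n k := by
  obtain ⟨m, rfl⟩ := Nat.exists_eq_add_of_lt hk
  rw [lagCoeff, lagCoeff, lagCoeff, show k + m + 1 + 1 - (k + 1) = m + 1 by omega,
    show k + m + 1 - (k + 1) = m by omega, show k + m + 1 - k = m + 1 by omega,
    show a + ((k + 1 : ℕ) : ℝ) + 1 = a + 1 + k + 1 by push_cast; ring,
    poch_succ_right, factorial_succ, factorial_succ k]
  push_cast
  field_simp
  ring

lemma lagP_add_one_succ (a x : ℝ) (n : ℕ) :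
    lagP (a + 1) (n + 1) x = lagP a (n + 1) x + lagP (a + 1) n x := by
  rw [lagP_eq_sum, lagP_eq_sum, lagP_eq_sum, sum_range_succ, sum_range_succ _ (n + 1),
    sum_congr rfl fun k hk => by rw [lagCoeff_add_one_succ a (mem_range_succ_iff.1 hk), add_mul],
    sum_add_distrib, lagCoeff_self, lagCoeff_self]
  ring

lemma succ_mul_lagP_succ (a x : ℝ) (n : ℕ) :
    (n + 1) * lagP a (n + 1) x = (n + 1 + a) * lagP a n x - x * lagP (a + 1) n x := by
  have hlow : lagP a (n + 1) x = ∑ k ∈ range n, lagCoeff a (n + 1) (k + 1) * x ^ (k + 1) +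
      lagCoeff a (n + 1) (n + 1) * x ^ (n + 1) + lagCoeff a (n + 1) 0 := by
    rw [lagP_eq_sum, sum_range_succ', sum_range_succ, pow_zero, mul_one]
  have hmid :
      lagP a n x = ∑ k ∈ range n, lagCoeff a n (k + 1) * x ^ (k + 1) + lagCoeff a n 0 := by
    rw [lagP_eq_sum, sum_range_succ', pow_zero, mul_one]
  have hhigh : x * lagP (a + 1) n x = ∑ k ∈ range n, lagCoeff (a + 1) n k * x ^ (k + 1) +
      lagCoeff (a + 1) n n * x ^ (n + 1) := by
    rw [lagP_eq_sum, sum_range_succ, mul_comm x, add_mul, sum_mul]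
    simp only [pow_succ, mul_assoc]
  have hsum : (n + 1) * ∑ k ∈ range n, lagCoeff a (n + 1) (k + 1) * x ^ (k + 1) =
      (n + 1 + a) * ∑ k ∈ range n, lagCoeff a n (k + 1) * x ^ (k + 1) -
        ∑ k ∈ range n, lagCoeff (a + 1) n k * x ^ (k + 1) := by
    rw [mul_sum, mul_sum, ← sum_sub_distrib]
    exact sum_congr rfl fun k hk => by
      linear_combination x ^ (k + 1) * succ_mul_lagCoeff_succ a (mem_range.1 hk)
  have hzero : (n + 1) * lagCoeff a (n + 1) 0 = (n + 1 + a) * lagCoeff a n 0 := by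
    rw [lagCoeff_zero_right, lagCoeff_zero_right, poch_succ_right, factorial_succ]
    push_cast
    field_simp
    ring
  have htop : (n + 1) * lagCoeff a (n + 1) (n + 1) = -lagCoeff (a + 1) n n := by
    rw [lagCoeff_self, lagCoeff_self, factorial_succ, pow_succ]
    push_cast
    field_simp
  rw [hlow, hmid, hhigh]
  linear_combination hsum + x ^ (n + 1) * htop + hzero

lemma sum_range_succ_lagP (a x : ℝ) (n : ℕ) :
    ∑ t ∈ range (n + 1), lagP a t x = lagP (a + 1) n x := by
  induction n with
  | zero => simp [lagP_zero]
  | succ n ih => rw [sum_range_succ, ih, lagP_add_one_succ, add_comm]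

end Laguerre

section LowerTri

variable {K : Type*} [Field K] {N : ℕ} (μ : Fin N → K)

/-- Conjugation by `diagonal μ` of the lower triangular matrix whose entry in column `j` and
`d` rows below the diagonal is `f j d`. -/
def lowerTri (f : ℕ → ℕ → K) : Matrix (Fin N) (Fin N) K :=
  Matrix.of fun i j => if (j : ℕ) ≤ i then μ i / μ j * f j (i - j) else 0

lemma lowerTri_add (f g : ℕ → ℕ → K) :
    lowerTri μ f + lowerTri μ g = lowerTri μ fun j d => f j d + g j d := by
  ext i j
  simp only [lowerTri, Matrix.add_apply, of_apply]
  split_ifs <;> ring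

lemma lowerTri_sub (f g : ℕ → ℕ → K) :
    lowerTri μ f - lowerTri μ g = lowerTri μ fun j d => f j d - g j d := by
  ext i j
  simp only [lowerTri, Matrix.sub_apply, of_apply]
  split_ifs <;> ring

lemma smul_lowerTri (c : K) (f : ℕ → ℕ → K) :
    c • lowerTri μ f = lowerTri μ fun j d => c * f j d := by
  ext i j
  simp only [lowerTri, Matrix.smul_apply, of_apply, smul_eq_mul]
  split_ifs <;> ring

variable {μ}

lemma diagonal_eq_lowerTri (hμ : ∀ k, μ k ≠ 0) (c : ℕ → K) :
    diagonal (fun i : Fin N => c i) = lowerTri μ fun j d => if d = 0 then c j else 0 := by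
  ext i j
  rcases eq_or_ne i j with rfl | hij
  · simp [lowerTri, hμ i]
  · have hij' : (i : ℕ) ≠ j := Fin.val_ne_of_ne hij
    simp only [lowerTri, diagonal_apply_ne _ hij, of_apply]
    split_ifs <;> first | omega | simp

lemma lowerTri_mul (hμ : ∀ k, μ k ≠ 0) (f g : ℕ → ℕ → K) :
    lowerTri μ f * lowerTri μ g =
      lowerTri μ fun j d => ∑ t ∈ range (d + 1), f (j + t) (d - t) * g j t := by
  ext i j
  have hterm : ∀ k : Fin N, lowerTri μ f i k * lowerTri μ g k j =
      if (j : ℕ) ≤ k ∧ (k : ℕ) ≤ i then μ i / μ j * (f k (i - k) * g j (k - j))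
      else 0 := by
    intro k
    simp only [lowerTri, of_apply]
    split_ifs <;> first | omega | simp | field_simp [hμ k]
  simp only [mul_apply, hterm]
  rw [Fin.sum_univ_eq_sum_range (fun k => if j ≤ k ∧ k ≤ (i : ℕ) then
    μ i / μ j * (f k (i - k) * g j (k - j)) else 0), ← sum_filter]
  simp only [lowerTri, of_apply]
  split_ifs with hji
  · have hIco : {k ∈ range N | (j : ℕ) ≤ k ∧ k ≤ i} = Ico (j : ℕ) (i + 1) := by
      ext k; simp only [mem_filter, mem_range, mem_Ico]; omega
    rw [hIco, sum_Ico_eq_sum_range, ← mul_sum, show (i : ℕ) + 1 - j = (i - j) + 1 by omega]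
    refine congrArg _ (sum_congr rfl fun t _ => ?_)
    rw [Nat.add_sub_cancel_left, Nat.sub_sub]
  · refine sum_eq_zero fun k hk => ?_
    simp only [mem_filter] at hk
    omega

lemma one_eq_lowerTri (hμ : ∀ k, μ k ≠ 0) :
    (1 : Matrix (Fin N) (Fin N) K) = lowerTri μ fun _ d => if d = 0 then 1 else 0 := by
  rw [← diagonal_one, diagonal_eq_lowerTri hμ fun _ => 1]

end LowerTri

lemma sum_range_succ_ite_sub_eq {M : Type*} [AddCommMonoid M] (d m : ℕ) (h : ℕ → M) :
    ∑ t ∈ range (d + 1), (if d - t = m then h t else 0) =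
      if m ≤ d then h (d - m) else 0 := by
  split_ifs with hm
  · rw [sum_eq_single (d - m)]
    · simp [Nat.sub_sub_self hm]
    · intro t ht hne
      simp only [mem_range] at ht
      exact if_neg (by omega)
    · simp only [mem_range]
      omega
  · refine sum_eq_zero fun t ht => if_neg ?_
    simp only [mem_range] at ht
    omega

section Amu

variable {N : ℕ} {μ : Fin N → ℝ}

lemma AmuMat_eq_lowerTri : AmuMat N μ = lowerTri μ fun _ d => if d = 1 then -1 else 0 := by
  ext i j
  simp only [AmuMat, lowerTri, of_apply]
  split_ifs <;> first | omega | simp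

lemma Jmat_eq_lowerTri (hμ : ∀ k, μ k ≠ 0) :
    Jmat N = lowerTri μ fun j d => if d = 0 then (j : ℝ) + 1 else 0 :=
  diagonal_eq_lowerTri hμ fun n => (n : ℝ) + 1

lemma AmuMat_mul_lowerTri (hμ : ∀ k, μ k ≠ 0) (g : ℕ → ℕ → ℝ) :
    AmuMat N μ * lowerTri μ g = lowerTri μ fun j d => if 1 ≤ d then -g j (d - 1) else 0 := by
  rw [AmuMat_eq_lowerTri, lowerTri_mul hμ]
  simp only [ite_mul, neg_one_mul, zero_mul, sum_range_succ_ite_sub_eq]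

lemma lowerTri_mul_AmuMat (hμ : ∀ k, μ k ≠ 0) (f : ℕ → ℕ → ℝ) :
    lowerTri μ f * AmuMat N μ =
      lowerTri μ fun j d => if 1 ≤ d then -f (j + 1) (d - 1) else 0 := by
  rw [AmuMat_eq_lowerTri, lowerTri_mul hμ]
  simp [sum_ite_eq', Nat.lt_iff_add_one_le]

lemma Jmat_mul_lowerTri (hμ : ∀ k, μ k ≠ 0) (g : ℕ → ℕ → ℝ) :
    Jmat N * lowerTri μ g = lowerTri μ fun j d => ((j : ℝ) + d + 1) * g j d := by
  rw [Jmat_eq_lowerTri hμ, lowerTri_mul hμ]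
  simp [sum_range_succ_ite_sub_eq, add_assoc]

lemma lowerTri_mul_Jmat (hμ : ∀ k, μ k ≠ 0) (f : ℕ → ℕ → ℝ) :
    lowerTri μ f * Jmat N = lowerTri μ fun j d => f j d * ((j : ℝ) + 1) := by
  rw [Jmat_eq_lowerTri hμ, lowerTri_mul hμ]
  simp

lemma inv_AmuMat_add_one (hμ : ∀ k, μ k ≠ 0) :
    (AmuMat N μ + 1)⁻¹ = lowerTri μ fun _ _ => 1 := by
  refine inv_eq_right_inv ?_
  rw [add_mul, one_mul, AmuMat_mul_lowerTri hμ, lowerTri_add, one_eq_lowerTri hμ]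
  congr
  funext j d
  split_ifs <;> first | omega | norm_num

lemma LagMat_eq_lowerTri (α x : ℝ) :
    LagMat N μ α x = lowerTri μ fun j d => lagP (α + j + 1) d x := rfl

lemma inv_AmuMat_add_one_mul_LagMat (hμ : ∀ k, μ k ≠ 0) (α x : ℝ) :
    (AmuMat N μ + 1)⁻¹ * LagMat N μ α x = LagMat N μ (α + 1) x := by
  rw [inv_AmuMat_add_one hμ, LagMat_eq_lowerTri, LagMat_eq_lowerTri, lowerTri_mul hμ]
  congr
  funext j d
  simp only [one_mul, sum_range_succ_lagP]
  ring_nf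

end Amu

theorem conjugation_identities_general (N : ℕ) (μ : Fin N → ℝ) (hμ : ∀ k, μ k ≠ 0)
    (α ν x : ℝ) :
    (((-x) • (AmuMat N μ + 1)⁻¹ + (ν + 1) • (1 : Matrix (Fin N) (Fin N) ℝ) + Jmat N +
          (α • (1 : Matrix (Fin N) (Fin N) ℝ) + Jmat N) * AmuMat N μ) * LagMat N μ α x =
        (2 * x) • (LagMat N μ α x * AmuMat N μ) +
          LagMat N μ α x *
            ((ν + 1) • (1 : Matrix (Fin N) (Fin N) ℝ) + Jmat N -
              x • (1 : Matrix (Fin N) (Fin N) ℝ))) ∧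
    (((α - ν) • (AmuMat N μ + 1)⁻¹ - Jmat N) * LagMat N μ α x =
        x • (LagMat N μ α x * AmuMat N μ ^ 2) +
          LagMat N μ α x * AmuMat N μ *
            ((ν + 1) • (1 : Matrix (Fin N) (Fin N) ℝ) + Jmat N -
              x • (1 : Matrix (Fin N) (Fin N) ℝ)) +
          LagMat N μ α x *
            ((α - ν) • (1 : Matrix (Fin N) (Fin N) ℝ) - Jmat N)) := by
  rw [pow_two, ← Matrix.mul_assoc]
  -- `(A_μ + 1)⁻¹ * L^{(α)}` must be recognised before `L^{(α)}` is unfolded.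
  simp only [add_mul, sub_mul, smul_mul_assoc, inv_AmuMat_add_one_mul_LagMat hμ]
  simp only [LagMat_eq_lowerTri, add_mul, Matrix.mul_assoc, mul_add, mul_sub, mul_smul_comm,
    one_mul, mul_one, lowerTri_mul_AmuMat hμ, AmuMat_mul_lowerTri hμ, Jmat_mul_lowerTri hμ,
    lowerTri_mul_Jmat hμ, smul_lowerTri, lowerTri_add, lowerTri_sub]
  refine ⟨congrArg _ (funext₂ fun j d => ?_), congrArg _ (funext₂ fun j d => ?_)⟩
  · rcases d with _ | q <;> simp only [lagP_zero, le_add_iff_nonneg_left, zero_le,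
      nonpos_iff_eq_zero, one_ne_zero, ↓reduceIte, add_tsub_cancel_right]
    · ring
    · linear_combination (norm := (push_cast; ring_nf))
        succ_mul_lagP_succ (α + j + 1) x q - x * lagP_add_one_succ (α + j + 1) x q
  · rcases d with _ | _ | q <;> simp only [lagP_zero, lagP_one, zero_add, le_refl,
      le_add_iff_nonneg_left, zero_le, nonpos_iff_eq_zero, one_ne_zero, ↓reduceIte,
      add_tsub_cancel_right, tsub_self]
    · ring
    · ring
    · linear_combination (norm := (push_cast; ring_nf))
        (α - ν) * lagP_add_one_succ (α + j + 1) x (q + 1)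
          - succ_mul_lagP_succ (α + j + 1) x (q + 1)
          + (α + j + q + 3) * lagP_add_one_succ (α + j + 1) x q
          - succ_mul_lagP_succ (α + j + 1 + 1) x q

/-- conjugation of `D^{(α,ν)}` by `L_μ^{(α)}` yields diagonal coefficients. -/
theorem conjugation_identities (N : ℕ) (hN : 1 ≤ N) (μ : Fin N → ℝ) (hμ : ∀ k, μ k ≠ 0)
    (α ν x : ℝ) :
    (((-x) • (AmuMat N μ + 1)⁻¹ + (ν + 1) • (1 : Matrix (Fin N) (Fin N) ℝ) + Jmat N +
          (α • (1 : Matrix (Fin N) (Fin N) ℝ) + Jmat N) * AmuMat N μ) * LagMat N μ α x =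
        (2 * x) • (LagMat N μ α x * AmuMat N μ) +
          LagMat N μ α x *
            ((ν + 1) • (1 : Matrix (Fin N) (Fin N) ℝ) + Jmat N -
              x • (1 : Matrix (Fin N) (Fin N) ℝ))) ∧
    (((α - ν) • (AmuMat N μ + 1)⁻¹ - Jmat N) * LagMat N μ α x =
        x • (LagMat N μ α x * AmuMat N μ ^ 2) +
          LagMat N μ α x * AmuMat N μ *
            ((ν + 1) • (1 : Matrix (Fin N) (Fin N) ℝ) + Jmat N -
              x • (1 : Matrix (Fin N) (Fin N) ℝ)) +
          LagMat N μ α x *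
            ((α - ν) • (1 : Matrix (Fin N) (Fin N) ℝ) - Jmat N)) :=
  conjugation_identities_general N μ hμ α ν x
end
end
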